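/- arXiv:1903.02115 — 3 statements merged into one kernel-verified Lean document; each statement's English description precedes it below -/
import Mathlib

section
/- Let X be a real Banach space, Δx > 0 a fixed step size, α₁, α₂ nonnegative integers with α₁ + α₂ ≥ 1, x ∈ ℝ, and set a = x − α₂Δx, b = x + α₁Δx. If f : ℝ → X is (α₁+α₂) times continuously differentiable on [a, b], then ‖D₊^{α₁} D₋^{α₂} f(x)‖ ≤ max_{a ≤ y ≤ b} ‖f^{(α₁+α₂)}(y)‖. -/
/-!
Since `D₊` commutes with translations and `D₋ g (x) = D₊ g (x - Δx)`, the operator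
`D₊^{α₁} D₋^{α₂}` evaluated at `x` is `D₊^n` evaluated at `a = x - α₂ Δx`, where `n = α₁ + α₂`.
For `D₊^n` at `a` we induct on `n`: on `[a, a + n Δx]` the `n`-th derivative of `D₊ f` is the
forward difference of `f^{(n)}`, which the mean value theorem bounds by `‖f^{(n+1)}‖` on
`[a, a + (n + 1) Δx]`.
-/

/-- Forward difference operator with step `h`: `D₊f(x) = (f(x+h) − f(x))/h`. -/
noncomputable def Dplus {X : Type*} [AddCommGroup X] [Module ℝ X] (h : ℝ) (f : ℝ → X) :
    ℝ → X := fun x => h⁻¹ • (f (x + h) - f x)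

/-- Backward difference operator with step `h`: `D₋f(x) = (f(x) − f(x−h))/h`. -/
noncomputable def Dminus {X : Type*} [AddCommGroup X] [Module ℝ X] (h : ℝ) (f : ℝ → X) :
    ℝ → X := fun x => h⁻¹ • (f x - f (x - h))

open Set
open scoped Pointwise

section Algebra

variable {X : Type*} [AddCommGroup X] [Module ℝ X]

theorem Dplus_commute_comp_add_const (h c : ℝ) :
    Function.Commute (Dplus (X := X) h) (fun g x => g (x + c)) := by
  intro f
  funext x
  simp only [Dplus, add_right_comm]

theorem Dminus_eq_Dplus_comp_add_neg (h : ℝ) (f : ℝ → X) :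
    Dminus h f = fun x => Dplus h f (x + -h) := by
  funext x
  simp only [Dminus, Dplus, ← sub_eq_add_neg, sub_add_cancel]

theorem Dplus_iterate_Dminus_iterate_apply (h : ℝ) (p q : ℕ) (f : ℝ → X) (x : ℝ) :
    (Dplus h)^[p] ((Dminus h)^[q] f) x = (Dplus h)^[p + q] f (x - q * h) := by
  induction q generalizing p x with
  | zero => simp
  | succ q ih =>
    rw [Function.iterate_succ_apply', Dminus_eq_Dplus_comp_add_neg,
      ((Dplus_commute_comp_add_const h (-h)).iterate_left p).eq]
    beta_reduce
    rw [← Function.iterate_succ_apply, ih, show p.succ + q = p + (q + 1) by omega,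
      show x + -h - q * h = x - ↑(q + 1) * h by push_cast; ring]

end Algebra

theorem UniqueDiffOn.vadd {𝕜 E : Type*} [NontriviallyNormedField 𝕜] [NormedAddCommGroup E]
    [NormedSpace 𝕜 E] {s : Set E} (hs : UniqueDiffOn 𝕜 s) (c : E) :
    UniqueDiffOn 𝕜 (c +ᵥ s) := by
  rw [← image_vadd]
  exact hs.image (fun x _ => ((hasFDerivAt_id x).const_add c).hasFDerivWithinAt)
    fun _ _ => denseRange_id

theorem iteratedDerivWithin_subset {𝕜 F : Type*} [NontriviallyNormedField 𝕜]
    [NormedAddCommGroup F] [NormedSpace 𝕜 F] {n : ℕ} {f : 𝕜 → F} {s t : Set 𝕜} {x : 𝕜}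
    (st : s ⊆ t) (hs : UniqueDiffOn 𝕜 s) (ht : UniqueDiffOn 𝕜 t) (hf : ContDiffOn 𝕜 n f t)
    (hx : x ∈ s) :
    iteratedDerivWithin n f s x = iteratedDerivWithin n f t x := by
  rw [iteratedDerivWithin, iteratedDerivWithin, iteratedFDerivWithin_subset st hs ht hf hx]

theorem IsCompact.le_biSup_of_continuousOn {α : Type*} [TopologicalSpace α] {s : Set α}
    (hs : IsCompact s) {g : α → ℝ} (hg : ContinuousOn g s) {y : α} (hy : y ∈ s) :
    g y ≤ ⨆ z ∈ s, g z :=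
  le_ciSup₂ (f := fun z (_ : z ∈ s) => g z)
    ((hs.bddAbove_image hg).mono (by simp [subset_def])) y hy

section Analysis

variable {X : Type*} [NormedAddCommGroup X] [NormedSpace ℝ X]

theorem ContDiffOn.comp_add_const {n : WithTop ℕ∞} {f : ℝ → X} {s t : Set ℝ} {c : ℝ}
    (hf : ContDiffOn ℝ n f s) (hts : MapsTo (· + c) t s) :
    ContDiffOn ℝ n (fun x => f (x + c)) t :=
  hf.comp (contDiff_id.add contDiff_const).contDiffOn hts

theorem ContDiffOn.Dplus {n : WithTop ℕ∞} {f : ℝ → X} {s t : Set ℝ} {h : ℝ}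
    (hf : ContDiffOn ℝ n f s) (hts : t ⊆ s) (hth : MapsTo (· + h) t s) :
    ContDiffOn ℝ n (Dplus h f) t :=
  ((hf.comp_add_const hth).sub (hf.mono hts)).const_smul h⁻¹

theorem iteratedDerivWithin_Dplus {n : ℕ} {f : ℝ → X} {s t : Set ℝ} {h y : ℝ}
    (hs : UniqueDiffOn ℝ s) (ht : UniqueDiffOn ℝ t) (hts : t ⊆ s) (hth : MapsTo (· + h) t s)
    (hf : ContDiffOn ℝ n f s) (hy : y ∈ t) :
    iteratedDerivWithin n (Dplus h f) t y = Dplus h (iteratedDerivWithin n f s) y := by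
  have hvadd : h +ᵥ t ⊆ s := by
    rintro _ ⟨z, hz, rfl⟩
    simpa [add_comm] using hth hz
  change iteratedDerivWithin n (h⁻¹ • ((fun z => f (z + h)) - f)) t y = _
  rw [iteratedDerivWithin_const_smul_field,
    iteratedDerivWithin_sub hy ht (hf.comp_add_const hth y hy) (hf.mono hts y hy),
    iteratedDerivWithin_comp_add_const]
  beta_reduce
  have hyh : y + h ∈ h +ᵥ t := by
    rw [add_comm]
    exact vadd_mem_vadd_set hy
  rw [iteratedDerivWithin_subset hvadd (ht.vadd h) hs hf hyh,
    iteratedDerivWithin_subset hts ht hs hf hy]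
  rfl

theorem norm_Dplus_le {g : ℝ → X} {s : Set ℝ} {h M y : ℝ} (hh : 0 < h) (hs : Convex ℝ s)
    (hg : DifferentiableOn ℝ g s) (hM : ∀ z ∈ s, ‖derivWithin g s z‖ ≤ M) (hy : y ∈ s)
    (hyh : y + h ∈ s) :
    ‖Dplus h g y‖ ≤ M := by
  have hmvt := hs.norm_image_sub_le_of_norm_derivWithin_le hg hM hy hyh
  rw [add_sub_cancel_left, Real.norm_of_nonneg hh.le] at hmvt
  rw [Dplus, norm_smul, norm_inv, Real.norm_of_nonneg hh.le]
  rwa [inv_mul_le_iff₀ hh, mul_comm]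

theorem norm_Dplus_iterate_le_of_norm_iteratedDerivWithin_le {f : ℝ → X} {h a M : ℝ} {n : ℕ}
    (hh : 0 < h) (hn : 1 ≤ n) (hf : ContDiffOn ℝ n f (Icc a (a + n * h)))
    (hM : ∀ y ∈ Icc a (a + n * h), ‖iteratedDerivWithin n f (Icc a (a + n * h)) y‖ ≤ M) :
    ‖(Dplus h)^[n] f a‖ ≤ M := by
  induction n, hn using Nat.le_induction generalizing f with
  | base =>
    simp only [Nat.cast_one, one_mul, iteratedDerivWithin_one] at hf hM
    exact norm_Dplus_le hh (convex_Icc _ _) (hf.differentiableOn one_ne_zero) hM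
      (left_mem_Icc.2 (by linarith)) (right_mem_Icc.2 (by linarith))
  | succ n hn ih =>
    set S := Icc a (a + ↑(n + 1) * h)
    set T := Icc a (a + n * h)
    have hn' : (1 : ℝ) ≤ n := by exact_mod_cast hn
    have hTS : T ⊆ S := Icc_subset_Icc_right (by push_cast; linarith)
    have hTS' : MapsTo (· + h) T S := fun y hy =>
      ⟨by linarith [hy.1], by push_cast; linarith [hy.2]⟩
    have hS : UniqueDiffOn ℝ S := uniqueDiffOn_Icc (by push_cast; nlinarith)
    have hT : UniqueDiffOn ℝ T := uniqueDiffOn_Icc (by nlinarith)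
    have hfn : ContDiffOn ℝ n f S := hf.of_le (by exact_mod_cast n.le_succ)
    rw [Function.iterate_succ_apply]
    refine ih (hfn.Dplus hTS hTS') fun y hy => ?_
    rw [iteratedDerivWithin_Dplus hS hT hTS hTS' hfn hy]
    refine norm_Dplus_le hh (convex_Icc _ _)
      (hf.differentiableOn_iteratedDerivWithin (by exact_mod_cast n.lt_succ_self) hS)
      (fun z hz => ?_) (hTS hy) (hTS' hy)
    rw [← iteratedDerivWithin_succ]
    exact hM z hz

end Analysis

/-- Proposition 1: if `f` is `(α₁+α₂)` times continuously differentiable on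
`[x − α₂Δx, x + α₁Δx]`, then
`‖D₊^{α₁}D₋^{α₂} f(x)‖ ≤ max_{a ≤ y ≤ b} ‖f^{(α₁+α₂)}(y)‖`. -/
theorem norm_Dplus_Dminus_iterate_le {X : Type*} [NormedAddCommGroup X] [NormedSpace ℝ X]
    (f : ℝ → X) (Δx : ℝ) (hΔx : 0 < Δx) (α₁ α₂ : ℕ) (hα : 1 ≤ α₁ + α₂) (x : ℝ)
    (hf : ContDiffOn ℝ (α₁ + α₂) f (Set.Icc (x - α₂ * Δx) (x + α₁ * Δx))) :
    ‖(Dplus Δx)^[α₁] ((Dminus Δx)^[α₂] f) x‖ ≤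
      ⨆ y ∈ Set.Icc (x - α₂ * Δx) (x + α₁ * Δx),
        ‖iteratedDerivWithin (α₁ + α₂) f (Set.Icc (x - α₂ * Δx) (x + α₁ * Δx)) y‖ := by
  have hS : Icc (x - α₂ * Δx) (x + α₁ * Δx)
      = Icc (x - α₂ * Δx) (x - α₂ * Δx + ↑(α₁ + α₂) * Δx) := by
    congr 1
    push_cast
    ring
  rw [Dplus_iterate_Dminus_iterate_apply, hS]
  rw [hS, ← Nat.cast_add] at hf
  have hlt : x - α₂ * Δx < x - α₂ * Δx + ↑(α₁ + α₂) * Δx :=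
    lt_add_of_pos_right _ (mul_pos (by exact_mod_cast hα) hΔx)
  refine norm_Dplus_iterate_le_of_norm_iteratedDerivWithin_le hΔx hα hf fun y hy => ?_
  exact isCompact_Icc.le_biSup_of_continuousOn
    (hf.continuousOn_iteratedDerivWithin le_rfl (uniqueDiffOn_Icc hlt)).norm hy
end

section
/- Let X be a real Banach space, T > 0, p ≥ 1 an integer, and u ∈ C^{2p+3}([0,T], X) the exact solution of u'(t) = F(t, u(t)), u(0) = u₀, where F : [0,T] × X → X is of class C^{2p+2} and μ-Lipschitz in its second variable. Let (u^{2,n}) be the solution of the modified trapezoidal scheme (u^{2,n+1} − u^{2,n})/k = F(t_{n+1/2}, (u^{2,n+1} + u^{2,n})/2), u^{2,0} = u₀, with k = T/N, t_n = nk, and assume the second-order error bound ‖u^{2,n} − u(t_n)‖ ≤ C₀ k² for all n = 0, …, N, with C₀ independent of k and n. Then there exist k₃ > 0 and a constant C, depending only on p, T, F, C₀ and the derivatives of u (not on k or n), such that for all 0 < k ≤ k₃, every m = 0, 1, …, p, and every admissible n ≥ m: ‖D(D₊D₋)^m (u^{2,n+1/2} − u(t_{n+1/2}))‖ + ‖(D₊D₋)^m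 (u^{2,n+1} − u(t_{n+1}))‖ ≤ C k². -/
/-
Write `E n = v n - u(t_n)` and `t_{n+1/2} = n k + k / 2`. Subtracting the scheme from
`u' = F(t, u)` taken at the midpoints gives
`D₊E n = F(t_{n+1/2}, (v (n+1) + v n) / 2) - F(t_{n+1/2}, u(t_{n+1/2})) + σ n`,
where `σ n = u'(t_{n+1/2}) - D₊u(t_n)` is the defect of the midpoint rule. By induction on
`j ≤ 2p+1` we show `‖D₊^j E‖ ≤ C_j k²`. The `j`-th difference quotients of `σ` and of the averaging
defect `(u(t_n) + u(t_{n+1}))/2 - u(t_{n+1/2})` are `O(k²)` by Taylor expansion of `u^{(j)}`. A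
discrete chain rule (fundamental theorem of calculus along segments plus the discrete Leibniz rule)
bounds the `j`-th difference quotient of the `F`-difference by the difference quotients of order
`≤ j` of its two arguments, whose difference is `O(k²)` in all these quotients by the induction
hypothesis. The derivatives of `F` are bounded on a thickening of the closed convex hull of the
solution curve, which contains the numerical midpoint states once `k` is small. Finally
`D(D₊D₋)^m = D₊^{2m+1}` and `(D₊D₋)^m = D₊^{2m}` up to an index shift.
-/

/-- Forward difference operator with step `k` on grid sequences: `D₊v^n = (v^{n+1} − v^n)/k`.
This is also the centered operator at half indices: `Dv^{n+1/2} = (v^{n+1} − v^n)/k`. -/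
noncomputable def sDp {X : Type*} [AddCommGroup X] [Module ℝ X] (k : ℝ) (s : ℕ → X) :
    ℕ → X := fun n => k⁻¹ • (s (n + 1) - s n)

/-- Backward difference operator with step `k` on grid sequences:
`D₋v^n = (v^n − v^{n−1})/k`. -/
noncomputable def sDm {X : Type*} [AddCommGroup X] [Module ℝ X] (k : ℝ) (s : ℕ → X) :
    ℕ → X := fun n => k⁻¹ • (s n - s (n - 1))

/-- The composite operator `D₊D₋` on grid sequences. -/
noncomputable def sDD {X : Type*} [AddCommGroup X] [Module ℝ X] (k : ℝ) :
    (ℕ → X) → (ℕ → X) := fun s => sDp k (sDm k s)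

open Set

section FiniteDifferences

variable {Z : Type*} [AddCommGroup Z] [Module ℝ Z]

theorem sDp_iterate_eq_smul_fwdDiff (k : ℝ) (l : ℕ) (s : ℕ → Z) :
    (sDp k)^[l] s = (k⁻¹ ^ l) • (fwdDiff 1)^[l] s := by
  induction l generalizing s with
  | zero => simp
  | succ l ih =>
    rw [Function.iterate_succ_apply, ih, Function.iterate_succ_apply,
      show sDp k s = k⁻¹ • fwdDiff 1 s from rfl, fwdDiff_iter_const_smul, smul_smul, pow_succ]

theorem sDp_iterate_apply (k : ℝ) (l : ℕ) (s : ℕ → Z) (n : ℕ) :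
    (sDp k)^[l] s n =
      (k⁻¹ ^ l) • ∑ j ∈ Finset.range (l + 1), ((-1 : ℤ) ^ (l - j) * l.choose j) • s (n + j) := by
  rw [sDp_iterate_eq_smul_fwdDiff, Pi.smul_apply, fwdDiff_iter_eq_sum_shift]
  simp

theorem sDp_iterate_congr (k : ℝ) (l : ℕ) {s s' : ℕ → Z} (n : ℕ)
    (h : ∀ i, n ≤ i → i ≤ n + l → s i = s' i) : (sDp k)^[l] s n = (sDp k)^[l] s' n := by
  simp only [sDp_iterate_apply]
  congr 1
  refine Finset.sum_congr rfl fun j hj => ?_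
  rw [h _ (by omega) (by simp at hj; omega)]

theorem sDp_iterate_map {W : Type*} [AddCommGroup W] [Module ℝ W] (L : Z →ₗ[ℝ] W) (k : ℝ)
    (l : ℕ) (s : ℕ → Z) (n : ℕ) : (sDp k)^[l] (fun i => L (s i)) n = L ((sDp k)^[l] s n) := by
  simp [sDp_iterate_apply, map_sum, map_zsmul]

theorem sDp_iterate_add (k : ℝ) (l : ℕ) (s s' : ℕ → Z) (n : ℕ) :
    (sDp k)^[l] (fun i => s i + s' i) n = (sDp k)^[l] s n + (sDp k)^[l] s' n := by
  simp [sDp_iterate_eq_smul_fwdDiff, ← Pi.add_def]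

theorem sDp_iterate_sub (k : ℝ) (l : ℕ) (s s' : ℕ → Z) (n : ℕ) :
    (sDp k)^[l] (fun i => s i - s' i) n = (sDp k)^[l] s n - (sDp k)^[l] s' n := by
  rw [sDp_iterate_apply, sDp_iterate_apply, sDp_iterate_apply, ← smul_sub,
    ← Finset.sum_sub_distrib]
  simp only [smul_sub]

theorem sDp_iterate_smul (k c : ℝ) (l : ℕ) (s : ℕ → Z) (n : ℕ) :
    (sDp k)^[l] (fun i => c • s i) n = c • (sDp k)^[l] s n :=
  sDp_iterate_map (LinearMap.lsmul ℝ Z c) k l s n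

theorem sDp_iterate_comp_add (k : ℝ) (l : ℕ) (s : ℕ → Z) (m n : ℕ) :
    (sDp k)^[l] (fun i => s (i + m)) n = (sDp k)^[l] s (n + m) := by
  simp only [sDp_iterate_eq_smul_fwdDiff, Pi.smul_apply, fwdDiff_iter_comp_add]

theorem sDp_iterate_const (k : ℝ) {l : ℕ} (hl : 1 ≤ l) (c : Z) (n : ℕ) :
    (sDp k)^[l] (fun _ => c) n = 0 := by
  obtain ⟨l, rfl⟩ := Nat.exists_eq_add_of_le' hl
  rw [Function.iterate_succ_apply, show sDp k (fun _ => c) = fun _ => (0 : Z) by ext; simp [sDp]]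
  simpa using sDp_iterate_smul k 0 l (fun _ => (0 : Z)) n

theorem sDp_iterate_grid (k t₀ : ℝ) (l : ℕ) (f : ℝ → Z) (n : ℕ) :
    (sDp k)^[l] (fun i => f (t₀ + i * k)) n = (k⁻¹ ^ l) • (fwdDiff k)^[l] f (t₀ + n * k) := by
  rw [sDp_iterate_apply, fwdDiff_iter_eq_sum_shift]
  congr 1
  refine Finset.sum_congr rfl fun j _ => ?_
  congr 2
  simp only [Nat.cast_add, nsmul_eq_mul]
  ring

theorem sDD_iterate_apply (k : ℝ) (m : ℕ) (s : ℕ → Z) (n : ℕ) :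
    (sDD k)^[m] s (n + m) = (sDp k)^[2 * m] s n := by
  induction m generalizing n with
  | zero => simp
  | succ m ih =>
    rw [Function.iterate_succ_apply', show 2 * (m + 1) = 2 * m + 1 + 1 by ring,
      Function.iterate_succ_apply', Function.iterate_succ_apply']
    simp only [sDD, sDp, sDm]
    rw [show n + (m + 1) + 1 - 1 = n + 1 + m by omega, show n + (m + 1) - 1 = n + m by omega,
      show n + (m + 1) + 1 = n + 2 + m by omega, show n + (m + 1) = n + 1 + m by omega,
      ih, ih, ih]

theorem sDp_sDD_iterate_apply (k : ℝ) (m : ℕ) (s : ℕ → Z) (n : ℕ) :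
    sDp k ((sDD k)^[m] s) (n + m) = (sDp k)^[2 * m + 1] s n := by
  rw [Function.iterate_succ_apply', sDp, sDp, show n + m + 1 = n + 1 + m by ring,
    sDD_iterate_apply, sDD_iterate_apply]

theorem sDp_iterate_prodMk {W : Type*} [AddCommGroup W] [Module ℝ W] (k : ℝ) (l : ℕ)
    (a : ℕ → Z) (x : ℕ → W) (n : ℕ) :
    (sDp k)^[l] (fun i => (a i, x i)) n = ((sDp k)^[l] a n, (sDp k)^[l] x n) :=
  Prod.ext (sDp_iterate_map (LinearMap.fst ℝ Z W) k l (fun i => (a i, x i)) n).symm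
    (sDp_iterate_map (LinearMap.snd ℝ Z W) k l (fun i => (a i, x i)) n).symm

end FiniteDifferences

theorem norm_sDp_iterate_grid_le_one {k : ℝ} (hk : k ≠ 0) (c : ℝ) {l : ℕ} (hl : 1 ≤ l) (n : ℕ) :
    ‖(sDp k)^[l] (fun i => i * k + c) n‖ ≤ 1 := by
  obtain ⟨l, rfl⟩ := Nat.exists_eq_add_of_le' hl
  have hD : sDp k (fun i => i * k + c) = fun _ => 1 := by
    ext i
    simp only [sDp, Nat.cast_succ, smul_eq_mul]
    field_simp
    ring
  rw [Function.iterate_succ_apply, hD]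
  rcases l.eq_zero_or_pos with rfl | hl
  · simp
  · simp [sDp_iterate_const k hl]

section DerivChain

variable {Z : Type*} [NormedAddCommGroup Z] [NormedSpace ℝ Z]

def HasDerivChainOn (f : ℕ → ℝ → Z) (n : ℕ) (s : Set ℝ) : Prop :=
  ∀ r < n, ∀ x ∈ s, HasDerivWithinAt (f r) (f (r + 1) x) s x

namespace HasDerivChainOn

variable {f g : ℕ → ℝ → Z} {n : ℕ} {s : Set ℝ}

theorem of_le (hf : HasDerivChainOn f n s) {m : ℕ} (hmn : m ≤ n) : HasDerivChainOn f m s :=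
  fun r hr => hf r (by omega)

theorem drop (hf : HasDerivChainOn f n s) (j : ℕ) :
    HasDerivChainOn (fun r => f (j + r)) (n - j) s :=
  fun r hr => hf (j + r) (by omega)

theorem tail (hf : HasDerivChainOn f n s) : HasDerivChainOn (fun r => f (r + 1)) (n - 1) s :=
  fun r hr => hf (r + 1) (by omega)

theorem mono (hf : HasDerivChainOn f n s) {t : Set ℝ} (hts : t ⊆ s) : HasDerivChainOn f n t :=
  fun r hr x hx => (hf r hr x (hts hx)).mono hts

theorem comp_add_const (hf : HasDerivChainOn f n s) {t : Set ℝ} (c : ℝ)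
    (hts : MapsTo (· + c) t s) : HasDerivChainOn (fun r y => f r (y + c)) n t := by
  intro r hr x hx
  simpa [Function.comp_def] using
    (hf r hr (x + c) (hts hx)).scomp x ((hasDerivWithinAt_id x t).add_const c) hts

theorem add (hf : HasDerivChainOn f n s) (hg : HasDerivChainOn g n s) :
    HasDerivChainOn (fun r y => f r y + g r y) n s :=
  fun r hr x hx => (hf r hr x hx).add (hg r hr x hx)

theorem sub (hf : HasDerivChainOn f n s) (hg : HasDerivChainOn g n s) :
    HasDerivChainOn (fun r y => f r y - g r y) n s :=
  fun r hr x hx => (hf r hr x hx).sub (hg r hr x hx)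

theorem const_smul (hf : HasDerivChainOn f n s) (c : ℝ) :
    HasDerivChainOn (fun r y => c • f r y) n s :=
  fun r hr x hx => (hf r hr x hx).const_smul c

theorem norm_fwdDiff_iterate_le {l : ℕ} {a b M h t : ℝ} (hf : HasDerivChainOn f l (Icc a b))
    (hM : ∀ x ∈ Icc a b, ‖f l x‖ ≤ M) (hh : 0 ≤ h) (ha : a ≤ t) (hb : t + l * h ≤ b) :
    ‖(fwdDiff h)^[l] (f 0) t‖ ≤ M * h ^ l := by
  induction l generalizing f b M with
  | zero => simpa using hM t ⟨ha, by simpa using hb⟩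
  | succ l ih =>
    push_cast at hb
    have hshift : MapsTo (· + h) (Icc a (b - h)) (Icc a b) :=
      fun x hx => ⟨by linarith [hx.1], by linarith [hx.2]⟩
    have hg : HasDerivChainOn (fun r => fwdDiff h (f r)) l (Icc a (b - h)) :=
      ((hf.comp_add_const h hshift).sub (hf.mono (Icc_subset_Icc_right (by linarith)))).of_le
        l.le_succ
    have hgM : ∀ x ∈ Icc a (b - h), ‖fwdDiff h (f l) x‖ ≤ M * h := by
      intro x hx
      have hmvt := (convex_Icc a b).norm_image_sub_le_of_norm_hasDerivWithin_le
        (hf l l.lt_succ_self) hM ⟨hx.1, by linarith [hx.2]⟩ (hshift hx)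
      simpa [fwdDiff, abs_of_nonneg hh] using hmvt
    rw [Function.iterate_succ_apply, pow_succ, mul_comm _ h, ← mul_assoc]
    exact ih hg hgM (by linarith)

end HasDerivChainOn

theorem ContDiffOn.hasDerivChainOn_iteratedDerivWithin {u : ℝ → Z} {n : ℕ} {a b : ℝ}
    (hu : ContDiffOn ℝ n u (Icc a b)) (hab : a < b) :
    HasDerivChainOn (fun l => iteratedDerivWithin l u (Icc a b)) n (Icc a b) := by
  intro r hr x hx
  simp only [iteratedDerivWithin_succ]
  exact (hu.differentiableOn_iteratedDerivWithin (by exact_mod_cast hr) (uniqueDiffOn_Icc hab)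
    x hx).hasDerivWithinAt

theorem hasDerivAt_taylorSum (c : ℕ → Z) (a y : ℝ) (n : ℕ) :
    HasDerivAt (fun y => ∑ r ∈ Finset.range (n + 1), ((y - a) ^ r / r.factorial) • c r)
      (∑ r ∈ Finset.range n, ((y - a) ^ r / r.factorial) • c (r + 1)) y := by
  induction n with
  | zero => simpa using hasDerivAt_const y (c 0)
  | succ n ih =>
    have hsplit : (fun y => ∑ r ∈ Finset.range (n + 1 + 1), ((y - a) ^ r / r.factorial) • c r) =
        fun y => ∑ r ∈ Finset.range (n + 1), ((y - a) ^ r / r.factorial) • c r +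
          ((y - a) ^ (n + 1) / (n + 1).factorial) • c (n + 1) :=
      funext fun y => Finset.sum_range_succ _ _
    rw [hsplit, Finset.sum_range_succ]
    refine ih.add ?_
    convert ((((hasDerivAt_id' y).sub_const a).fun_pow (n + 1)).div_const
      ((n + 1).factorial : ℝ)).smul_const (c (n + 1)) using 2
    rw [Nat.add_sub_cancel, Nat.factorial_succ]
    push_cast
    field_simp

theorem HasDerivChainOn.norm_sub_taylorSum_le {f : ℕ → ℝ → Z} {n : ℕ} {s : Set ℝ}
    (hf : HasDerivChainOn f n s) (hs : Convex ℝ s) {M : ℝ} (hM : ∀ y ∈ s, ‖f n y‖ ≤ M)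
    {a x : ℝ} (ha : a ∈ s) (hx : x ∈ s) :
    ‖f 0 x - ∑ r ∈ Finset.range n, ((x - a) ^ r / r.factorial) • f r a‖ ≤ M * |x - a| ^ n := by
  induction n generalizing f x with
  | zero => simpa using hM x hx
  | succ n ih =>
    have hseg : segment ℝ a x ⊆ s := hs.segment_subset ha hx
    have hderiv : ∀ y ∈ segment ℝ a x, HasDerivWithinAt
        (fun y => f 0 y - ∑ r ∈ Finset.range (n + 1), ((y - a) ^ r / r.factorial) • f r a)
        (f 1 y - ∑ r ∈ Finset.range n, ((y - a) ^ r / r.factorial) • f (r + 1) a)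
        (segment ℝ a x) y := fun y hy =>
      ((hf 0 n.succ_pos y (hseg hy)).mono hseg).sub
        (hasDerivAt_taylorSum (f · a) a y n).hasDerivWithinAt
    have hbound : ∀ y ∈ segment ℝ a x,
        ‖f 1 y - ∑ r ∈ Finset.range n, ((y - a) ^ r / r.factorial) • f (r + 1) a‖ ≤
          M * |x - a| ^ n := by
      intro y hy
      have hM0 : 0 ≤ M := (norm_nonneg _).trans (hM a ha)
      calc _ ≤ M * |y - a| ^ n := ih hf.tail hM (hseg hy)
        _ ≤ M * |x - a| ^ n := by
          gcongr M * ?_ ^ n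
          simpa only [Real.norm_eq_abs] using norm_sub_le_of_mem_segment hy
    have hmvt := (convex_segment a x).norm_image_sub_le_of_norm_hasDerivWithin_le hderiv hbound
      (left_mem_segment ℝ a x) (right_mem_segment ℝ a x)
    have hφa : f 0 a - ∑ r ∈ Finset.range (n + 1), ((a - a) ^ r / r.factorial) • f r a = 0 := by
      simp [Finset.sum_range_succ']
    rw [hφa, sub_zero] at hmvt
    simpa only [Real.norm_eq_abs, pow_succ, mul_assoc] using hmvt

end DerivChain

section Consistency

variable {Z : Type*} [NormedAddCommGroup Z] [NormedSpace ℝ Z] {f : ℕ → ℝ → Z} {s : Set ℝ}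

theorem HasDerivChainOn.norm_average_sub_midpoint_le (hf : HasDerivChainOn f 2 s)
    (hs : Convex ℝ s) {M : ℝ} (hM : ∀ y ∈ s, ‖f 2 y‖ ≤ M) {t h : ℝ} (hh : 0 ≤ h) (ht : t ∈ s)
    (hth : t + h ∈ s) :
    ‖(2 : ℝ)⁻¹ • (f 0 t + f 0 (t + h)) - f 0 (t + h / 2)‖ ≤ M * h ^ 2 := by
  have hmid : t + h / 2 ∈ s := by
    simpa [div_eq_inv_mul, mul_comm] using
      hs.add_smul_sub_mem ht hth (t := 2⁻¹) ⟨by norm_num, by norm_num⟩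
  have h₁ := hf.norm_sub_taylorSum_le hs hM ht hth
  have h₂ := hf.norm_sub_taylorSum_le hs hM ht hmid
  simp only [Finset.sum_range_succ, Finset.sum_range_zero, add_sub_cancel_left, abs_of_nonneg hh,
    abs_of_nonneg (by linarith : 0 ≤ h / 2), pow_zero, pow_one, Nat.factorial_zero,
    Nat.factorial_one, Nat.cast_one, div_one, one_smul, zero_add] at h₁ h₂
  have hM0 : 0 ≤ M := (norm_nonneg _).trans (hM t ht)
  calc _ = ‖(2 : ℝ)⁻¹ • (f 0 (t + h) - (f 0 t + h • f 1 t))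
          - (f 0 (t + h / 2) - (f 0 t + (h / 2) • f 1 t))‖ := by congr 1; module
    _ ≤ 2⁻¹ * (M * h ^ 2) + M * (h / 2) ^ 2 := by
      refine (norm_sub_le _ _).trans (add_le_add ?_ h₂)
      rw [norm_smul, Real.norm_of_nonneg (by norm_num)]
      gcongr
    _ ≤ M * h ^ 2 := by nlinarith [mul_nonneg hM0 (sq_nonneg h)]

theorem HasDerivChainOn.norm_deriv_midpoint_sub_slope_le (hf : HasDerivChainOn f 3 s)
    (hs : Convex ℝ s) {M : ℝ} (hM : ∀ y ∈ s, ‖f 3 y‖ ≤ M) {t h : ℝ} (hh : 0 < h) (ht : t ∈ s)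
    (hth : t + h ∈ s) :
    ‖f 1 (t + h / 2) - h⁻¹ • (f 0 (t + h) - f 0 t)‖ ≤ 2 * M * h ^ 2 := by
  have hmid : t + h / 2 ∈ s := by
    simpa [div_eq_inv_mul, mul_comm] using
      hs.add_smul_sub_mem ht hth (t := 2⁻¹) ⟨by norm_num, by norm_num⟩
  have h₁ := hf.norm_sub_taylorSum_le hs hM ht hth
  have h₂ := hf.tail.norm_sub_taylorSum_le hs hM ht hmid
  simp only [Finset.sum_range_succ, Finset.sum_range_zero, add_sub_cancel_left, abs_of_pos hh,
    abs_of_pos (by linarith : 0 < h / 2), pow_zero, pow_one, Nat.factorial_zero,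
    Nat.factorial_one, Nat.factorial_two, Nat.cast_one, Nat.cast_ofNat, div_one, one_smul,
    zero_add] at h₁ h₂
  have hM0 : 0 ≤ M := (norm_nonneg _).trans (hM t ht)
  calc _ = ‖(f 1 (t + h / 2) - (f 1 t + (h / 2) • f 2 t))
          - h⁻¹ • (f 0 (t + h) - (f 0 t + h • f 1 t + (h ^ 2 / 2) • f 2 t))‖ := by
        congr 1
        match_scalars <;> field_simp <;> ring
    _ ≤ M * (h / 2) ^ 2 + h⁻¹ * (M * h ^ 3) := by
      refine (norm_sub_le _ _).trans (add_le_add h₂ ?_)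
      rw [norm_smul, Real.norm_of_nonneg (by positivity)]
      gcongr
    _ ≤ 2 * M * h ^ 2 := by
      field_simp
      nlinarith [mul_nonneg hM0 (pow_nonneg hh.le 3)]

end Consistency

section GridSequences

variable {Z : Type*} [NormedAddCommGroup Z] [NormedSpace ℝ Z] {f w : ℕ → ℝ → Z}

theorem HasDerivChainOn.norm_sDp_iterate_le {l : ℕ} {a b M k t₀ : ℝ}
    (hf : HasDerivChainOn f l (Icc a b)) (hM : ∀ x ∈ Icc a b, ‖f l x‖ ≤ M) (hk : 0 < k)
    {s : ℕ → Z} (hs : ∀ i, s i = f 0 (t₀ + i * k)) {n : ℕ} (ha : a ≤ t₀ + n * k)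
    (hb : t₀ + (n + l) * k ≤ b) : ‖(sDp k)^[l] s n‖ ≤ M := by
  rw [funext hs, sDp_iterate_grid, norm_smul, norm_pow, norm_inv, Real.norm_of_nonneg hk.le,
    inv_pow]
  calc (k ^ l)⁻¹ * _ ≤ (k ^ l)⁻¹ * (M * k ^ l) := by
        gcongr
        exact hf.norm_fwdDiff_iterate_le hM hk.le ha (by linarith)
    _ = M := by field_simp

variable {T k MU : ℝ} {L : ℕ}

theorem HasDerivChainOn.norm_sDp_iterate_average_sub_midpoint_le
    (hw : HasDerivChainOn w L (Icc 0 T)) (hMU : ∀ l ≤ L, ∀ t ∈ Icc 0 T, ‖w l t‖ ≤ MU)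
    (hk : 0 < k) {l n : ℕ} (hl : l + 2 ≤ L) (hn : (n + l + 1) * k ≤ T) :
    ‖(sDp k)^[l] (fun i => (2 : ℝ)⁻¹ • (w 0 (i * k) + w 0 (i * k + k)) - w 0 (i * k + k / 2)) n‖
      ≤ MU * k ^ 2 := by
  have hsub : Icc 0 (T - k) ⊆ Icc 0 T := Icc_subset_Icc_right (by linarith)
  have hshift : ∀ c, 0 ≤ c → c ≤ k → MapsTo (· + c) (Icc 0 (T - k)) (Icc 0 T) :=
    fun c hc hck x hx => ⟨by linarith [hx.1], by linarith [hx.2]⟩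
  have hchain : HasDerivChainOn
      (fun r y => (2 : ℝ)⁻¹ • (w r y + w r (y + k)) - w r (y + k / 2)) L (Icc 0 (T - k)) :=
    (((hw.mono hsub).add (hw.comp_add_const k (hshift k hk.le le_rfl))).const_smul _).sub
      (hw.comp_add_const (k / 2) (hshift _ (by linarith) (by linarith)))
  refine (hchain.of_le (by omega)).norm_sDp_iterate_le (fun y hy => ?_) hk (t₀ := 0)
    (fun i => by simp) (by positivity) (by linarith)
  exact (hw.drop l).of_le (by omega) |>.norm_average_sub_midpoint_le (convex_Icc 0 T)
    (fun t ht => hMU (l + 2) hl t ht) hk.le (hsub hy) (hshift k hk.le le_rfl hy)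

theorem HasDerivChainOn.norm_sDp_iterate_deriv_midpoint_sub_slope_le
    (hw : HasDerivChainOn w L (Icc 0 T)) (hMU : ∀ l ≤ L, ∀ t ∈ Icc 0 T, ‖w l t‖ ≤ MU)
    (hk : 0 < k) {l n : ℕ} (hl : l + 3 ≤ L) (hn : (n + l + 1) * k ≤ T) :
    ‖(sDp k)^[l] (fun i => w 1 (i * k + k / 2) - k⁻¹ • (w 0 (i * k + k) - w 0 (i * k))) n‖
      ≤ 2 * MU * k ^ 2 := by
  have hsub : Icc 0 (T - k) ⊆ Icc 0 T := Icc_subset_Icc_right (by linarith)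
  have hshift : ∀ c, 0 ≤ c → c ≤ k → MapsTo (· + c) (Icc 0 (T - k)) (Icc 0 T) :=
    fun c hc hck x hx => ⟨by linarith [hx.1], by linarith [hx.2]⟩
  have hslope : HasDerivChainOn (fun r y => k⁻¹ • (w r (y + k) - w r y)) L (Icc 0 (T - k)) :=
    ((hw.comp_add_const k (hshift k hk.le le_rfl)).sub (hw.mono hsub)).const_smul k⁻¹
  have hchain : HasDerivChainOn
      (fun r y => w (r + 1) (y + k / 2) - k⁻¹ • (w r (y + k) - w r y)) (L - 1) (Icc 0 (T - k)) :=
    (hw.tail.comp_add_const (k / 2) (hshift _ (by linarith) (by linarith))).sub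
      (hslope.of_le (by omega))
  refine (hchain.of_le (by omega)).norm_sDp_iterate_le (fun y hy => ?_) hk (t₀ := 0)
    (fun i => by simp) (by positivity) (by linarith)
  exact (hw.drop l).of_le (by omega) |>.norm_deriv_midpoint_sub_slope_le (convex_Icc 0 T)
    (fun t ht => hMU (l + 3) hl t ht) hk (hsub hy) (hshift k hk.le le_rfl hy)

end GridSequences

section DiscreteCalculus

universe u

variable {W Z : Type u} [NormedAddCommGroup W] [NormedSpace ℝ W] [NormedAddCommGroup Z]
  [NormedSpace ℝ Z]

theorem sDp_clm_apply (k : ℝ) (A : ℕ → W →L[ℝ] Z) (x : ℕ → W) :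
    sDp k (fun i => A i (x i)) = fun n => A (n + 1) (sDp k x n) + sDp k A n (x n) := by
  ext n
  simp only [sDp, smul_apply, sub_apply, map_smul, map_sub, ← smul_add]
  abel_nf

theorem norm_sDp_iterate_clm_apply_le (k : ℝ) {m b : ℕ} {A : ℕ → W →L[ℝ] Z} {x : ℕ → W}
    {P Q : ℝ} (hA : ∀ l ≤ m, ∀ n, n + l ≤ b → ‖(sDp k)^[l] A n‖ ≤ P)
    (hx : ∀ l ≤ m, ∀ n, n + l ≤ b → ‖(sDp k)^[l] x n‖ ≤ Q) {n : ℕ} (hn : n + m ≤ b) :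
    ‖(sDp k)^[m] (fun i => A i (x i)) n‖ ≤ 2 ^ m * P * Q := by
  induction m generalizing A x b n with
  | zero =>
    have hP : 0 ≤ P := (norm_nonneg _).trans (hA 0 le_rfl n hn)
    simpa using ((A n).le_opNorm (x n)).trans
      (mul_le_mul (hA 0 le_rfl n hn) (hx 0 le_rfl n hn) (norm_nonneg _) hP)
  | succ m ih =>
    rw [Function.iterate_succ_apply, sDp_clm_apply, sDp_iterate_add]
    have h₁ : ‖(sDp k)^[m] (fun i => A (i + 1) (sDp k x i)) n‖ ≤ 2 ^ m * P * Q := by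
      refine ih (b := b - 1) (fun l hl n' hn' => ?_) (fun l hl n' hn' => ?_) (by omega)
      · rw [sDp_iterate_comp_add]
        exact hA l (by omega) _ (by omega)
      · rw [← Function.iterate_succ_apply]
        exact hx (l + 1) (by omega) n' (by omega)
    have h₂ : ‖(sDp k)^[m] (fun i => sDp k A i (x i)) n‖ ≤ 2 ^ m * P * Q := by
      refine ih (b := b - 1) (fun l hl n' hn' => ?_) (fun l hl n' hn' => ?_) (by omega)
      · rw [← Function.iterate_succ_apply]
        exact hA (l + 1) (by omega) n' (by omega)
      · exact hx l (by omega) n' (by omega)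
    calc _ ≤ 2 ^ m * P * Q + 2 ^ m * P * Q := norm_add_le_of_le h₁ h₂
      _ = 2 ^ (m + 1) * P * Q := by ring

theorem sDp_iterate_integral (k : ℝ) (l : ℕ) {f : ℕ → ℝ → Z}
    (hf : ∀ i, IntervalIntegrable (f i) MeasureTheory.volume 0 1) (n : ℕ) :
    (sDp k)^[l] (fun i => ∫ s in (0 : ℝ)..1, f i s) n =
      ∫ s in (0 : ℝ)..1, (sDp k)^[l] (fun i => f i s) n := by
  induction l generalizing f with
  | zero => rfl
  | succ l ih =>
    have hD : sDp k (fun i => ∫ s in (0 : ℝ)..1, f i s) =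
        fun i => ∫ s in (0 : ℝ)..1, k⁻¹ • (f (i + 1) s - f i s) := by
      ext i
      rw [intervalIntegral.integral_smul, intervalIntegral.integral_sub (hf _) (hf _)]
      rfl
    rw [Function.iterate_succ_apply, hD, ih (f := fun i s => k⁻¹ • (f (i + 1) s - f i s))
      fun i => ((hf (i + 1)).sub (hf i)).smul k⁻¹]
    rfl

theorem sub_eq_integral_fderiv [CompleteSpace Z] {g : W → Z} (hg : ContDiff ℝ 1 g) (x y : W) :
    g x - g y = ∫ s in (0 : ℝ)..1, fderiv ℝ g (y + s • (x - y)) (x - y) := by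
  have := map_add_eq_sum_add_integral_iteratedFDeriv (n := 0) (x := y) (y := x - y)
    (fun t _ => hg.contDiffAt)
  simp only [add_sub_cancel, zero_add, Finset.range_one, Finset.sum_singleton] at this
  rw [this]
  simp [iteratedFDeriv_one_apply]

theorem norm_sDp_iterate_comp_sub_comp_le_of_fderiv [CompleteSpace Z] (k : ℝ) {j b : ℕ}
    {g : W → Z} (hg : ContDiff ℝ 1 g)
    {x y : ℕ → W} {P ε : ℝ}
    (hP : ∀ s ∈ Icc (0 : ℝ) 1, ∀ l ≤ j, ∀ n, n + l ≤ b →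
      ‖(sDp k)^[l] (fun i => fderiv ℝ g (y i + s • (x i - y i))) n‖ ≤ P)
    (hε : ∀ l ≤ j, ∀ n, n + l ≤ b → ‖(sDp k)^[l] (fun i => x i - y i) n‖ ≤ ε)
    {n : ℕ} (hn : n + j ≤ b) :
    ‖(sDp k)^[j] (fun i => g (x i) - g (y i)) n‖ ≤ 2 ^ j * P * ε := by
  have hcont : ∀ i, Continuous fun s : ℝ => fderiv ℝ g (y i + s • (x i - y i)) (x i - y i) :=
    fun i => ((hg.continuous_fderiv one_ne_zero).comp (by fun_prop)).clm_apply continuous_const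
  simp_rw [sub_eq_integral_fderiv hg]
  rw [sDp_iterate_integral k j (fun i => (hcont i).intervalIntegrable 0 1)]
  have := intervalIntegral.norm_integral_le_of_norm_le_const (a := 0) (b := 1)
    (C := 2 ^ j * P * ε) (f := fun s => (sDp k)^[j]
      (fun i => fderiv ℝ g (y i + s • (x i - y i)) (x i - y i)) n)
    fun s hs => norm_sDp_iterate_clm_apply_le k
      (hP s (Ioc_subset_Icc_self (by rwa [uIoc_of_le zero_le_one] at hs))) hε hn
  simpa using this

theorem norm_sDp_iterate_add_smul_sub_le (k : ℝ) (l : ℕ) {x y : ℕ → W} {n : ℕ} {Q : ℝ}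
    (hx : ‖(sDp k)^[l] x n‖ ≤ Q) (hy : ‖(sDp k)^[l] y n‖ ≤ Q) {s : ℝ} (hs : s ∈ Icc (0 : ℝ) 1) :
    ‖(sDp k)^[l] (fun i => y i + s • (x i - y i)) n‖ ≤ Q := by
  rw [sDp_iterate_add, sDp_iterate_smul, sDp_iterate_sub]
  simpa using (convex_closedBall (0 : W) Q).add_smul_sub_mem (by simpa using hy)
    (by simpa using hx) hs

theorem norm_iteratedFDeriv_fderiv_le {g : W → Z} {j : ℕ} {S : Set W} {M : ℝ}
    (hgM : ∀ l ≤ j + 1, ∀ w ∈ S, ‖iteratedFDeriv ℝ l g w‖ ≤ M) :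
    ∀ l ≤ j, ∀ w ∈ S, ‖iteratedFDeriv ℝ l (fderiv ℝ g) w‖ ≤ M := fun l hl w hw => by
  rw [norm_iteratedFDeriv_fderiv]
  exact hgM (l + 1) (by omega) w hw

theorem norm_sDp_iterate_comp_le [CompleteSpace Z] {k : ℝ} (hk : k ≠ 0) {j b : ℕ} {g : W → Z}
    (hg : ContDiff ℝ j g) {S : Set W} (hS : Convex ℝ S) {M Q : ℝ} (hQ : 1 ≤ Q)
    (hgM : ∀ l ≤ j, ∀ w ∈ S, ‖iteratedFDeriv ℝ l g w‖ ≤ M) {y : ℕ → W} (hyS : ∀ n ≤ b, y n ∈ S)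
    (hyQ : ∀ l, 1 ≤ l → l ≤ j → ∀ n, n + l ≤ b → ‖(sDp k)^[l] y n‖ ≤ Q)
    {l n : ℕ} (hl : l ≤ j) (hn : n + l ≤ b) :
    ‖(sDp k)^[l] (fun i => g (y i)) n‖ ≤ 2 ^ (j * j) * M * Q ^ j := by
  induction j generalizing Z g y l n b with
  | zero =>
    obtain rfl : l = 0 := by omega
    simpa using hgM 0 le_rfl (y n) (hyS n (by omega))
  | succ j ih =>
    have hM : 0 ≤ M := (norm_nonneg _).trans (hgM 0 (by omega) (y 0) (hyS 0 (by omega)))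
    have hmono : 2 ^ (j * j) * M * Q ^ j ≤ 2 ^ ((j + 1) * (j + 1)) * M * Q ^ (j + 1) := by
      gcongr
      all_goals first | exact one_le_two | exact hQ | omega
    rcases Nat.lt_succ_iff_lt_or_eq.mp (Nat.lt_succ_of_le hl) with hl | rfl
    · exact (ih (hg.of_le (by norm_cast; omega)) (fun l hl => hgM l (by omega)) hyS
        (fun l h₁ h₂ => hyQ l h₁ (by omega)) (by omega) hn).trans hmono
    have hP : ∀ s ∈ Icc (0 : ℝ) 1, ∀ l ≤ j, ∀ n', n' + l ≤ b - 1 →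
        ‖(sDp k)^[l] (fun i => fderiv ℝ g (y i + s • (y (i + 1) - y i))) n'‖ ≤
          2 ^ (j * j) * M * Q ^ j := fun s hs l hl n' hn' =>
      ih (hg.fderiv_right le_rfl) (norm_iteratedFDeriv_fderiv_le hgM)
        (fun i hi => hS.add_smul_sub_mem (hyS i (by omega)) (hyS (i + 1) (by omega)) hs)
        (fun l' h₁ h₂ n'' hn'' => norm_sDp_iterate_add_smul_sub_le k l'
          (by rw [sDp_iterate_comp_add]; exact hyQ l' h₁ (by omega) _ (by omega))
          (hyQ l' h₁ (by omega) _ (by omega)) hs) hl hn'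
    have hε : ∀ l ≤ j, ∀ n', n' + l ≤ b - 1 →
        ‖(sDp k)^[l] (fun i => y (i + 1) - y i) n'‖ ≤ ‖k‖ * Q := by
      intro l hl n' hn'
      have hxy : (fun i => y (i + 1) - y i) = fun i => k • sDp k y i := by
        ext i
        simp [sDp, smul_smul, hk]
      rw [hxy, sDp_iterate_smul, norm_smul, ← Function.iterate_succ_apply]
      gcongr
      exact hyQ (l + 1) (by omega) (by omega) n' (by omega)
    have hdiff := norm_sDp_iterate_comp_sub_comp_le_of_fderiv k (hg.of_le (by norm_cast; omega))
      hP hε (n := n) (by omega)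
    have hstep : sDp k (fun i => g (y i)) = fun i => k⁻¹ • (g (y (i + 1)) - g (y i)) := rfl
    rw [Function.iterate_succ_apply, hstep, sDp_iterate_smul, norm_smul, norm_inv]
    calc ‖k‖⁻¹ * _ ≤ ‖k‖⁻¹ * (2 ^ j * (2 ^ (j * j) * M * Q ^ j) * (‖k‖ * Q)) :=
          mul_le_mul_of_nonneg_left hdiff (inv_nonneg.mpr (norm_nonneg k))
      _ = 2 ^ (j + j * j) * M * Q ^ (j + 1) := by
        field_simp [norm_ne_zero_iff.mpr hk]
        ring
      _ ≤ 2 ^ ((j + 1) * (j + 1)) * M * Q ^ (j + 1) := by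
        gcongr
        all_goals first | exact one_le_two | nlinarith

theorem norm_sDp_iterate_comp_sub_comp_le [CompleteSpace Z] {k : ℝ} (hk : k ≠ 0) {j b : ℕ}
    {g : W → Z} (hg : ContDiff ℝ (j + 1) g) {S : Set W} (hS : Convex ℝ S) {M Q ε : ℝ} (hQ : 1 ≤ Q)
    (hgM : ∀ l ≤ j + 1, ∀ w ∈ S, ‖iteratedFDeriv ℝ l g w‖ ≤ M) {x y : ℕ → W}
    (hxS : ∀ n ≤ b, x n ∈ S) (hyS : ∀ n ≤ b, y n ∈ S)
    (hxQ : ∀ l, 1 ≤ l → l ≤ j → ∀ n, n + l ≤ b → ‖(sDp k)^[l] x n‖ ≤ Q)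
    (hyQ : ∀ l, 1 ≤ l → l ≤ j → ∀ n, n + l ≤ b → ‖(sDp k)^[l] y n‖ ≤ Q)
    (hε : ∀ l ≤ j, ∀ n, n + l ≤ b → ‖(sDp k)^[l] (fun i => x i - y i) n‖ ≤ ε)
    {n : ℕ} (hn : n + j ≤ b) :
    ‖(sDp k)^[j] (fun i => g (x i) - g (y i)) n‖ ≤ 2 ^ j * (2 ^ (j * j) * M * Q ^ j) * ε :=
  norm_sDp_iterate_comp_sub_comp_le_of_fderiv k (hg.of_le (by norm_cast; omega))
    (fun _ hs _ hl _ hn' => norm_sDp_iterate_comp_le hk (hg.fderiv_right le_rfl) hS hQ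
      (norm_iteratedFDeriv_fderiv_le hgM)
      (fun i hi => hS.add_smul_sub_mem (hyS i hi) (hxS i hi) hs)
      (fun l h₁ h₂ n' hn' => norm_sDp_iterate_add_smul_sub_le k l (hxQ l h₁ h₂ n' hn')
        (hyQ l h₁ h₂ n' hn') hs) hl hn') hε hn

end DiscreteCalculus

section Trapezoid

variable {X : Type} [NormedAddCommGroup X] [NormedSpace ℝ X] {w : ℕ → ℝ → X} {T k MU : ℝ}
  {L : ℕ}

theorem trapezoid_sDp_error_eq {F : ℝ → X → X} (hw1 : ∀ t ∈ Icc 0 T, w 1 t = F t (w 0 t))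
    {v : ℕ → X} {i : ℕ}
    (hscheme : k⁻¹ • (v (i + 1) - v i) = F ((i + 1 / 2) * k) ((2 : ℝ)⁻¹ • (v (i + 1) + v i)))
    (hi : (i : ℝ) * k + k / 2 ∈ Icc 0 T) :
    sDp k (fun i => v i - w 0 (i * k)) i =
      (Function.uncurry F (i * k + k / 2, (2 : ℝ)⁻¹ • (v (i + 1) + v i)) -
        Function.uncurry F (i * k + k / 2, w 0 (i * k + k / 2))) +
      (w 1 (i * k + k / 2) - k⁻¹ • (w 0 (i * k + k) - w 0 (i * k))) := by
  rw [show ((i : ℝ) + 1 / 2) * k = i * k + k / 2 by ring] at hscheme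
  simp only [sDp, Function.uncurry_apply_pair, ← hscheme, hw1 _ hi, Nat.cast_succ, add_mul,
    one_mul]
  module

theorem HasDerivChainOn.norm_sDp_iterate_graph_midpoint_le (hw : HasDerivChainOn w L (Icc 0 T))
    (hMU : ∀ l ≤ L, ∀ t ∈ Icc 0 T, ‖w l t‖ ≤ MU) (hk : 0 < k) {l n : ℕ} (hl₁ : 1 ≤ l)
    (hl : l ≤ L) (hn : (n + l + 1) * k ≤ T) :
    ‖(sDp k)^[l] (fun i : ℕ => ((i * k + k / 2 : ℝ), w 0 (i * k + k / 2))) n‖ ≤ 1 + MU := by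
  have hMU0 : 0 ≤ MU := (norm_nonneg _).trans (hMU 0 (by omega) 0 ⟨le_rfl, le_trans
    (by positivity) hn⟩)
  rw [sDp_iterate_prodMk, Prod.norm_mk]
  refine max_le ((norm_sDp_iterate_grid_le_one hk.ne' _ hl₁ n).trans (by linarith)) ?_
  refine ((hw.of_le hl).norm_sDp_iterate_le (hMU l hl) hk (t₀ := k / 2)
    (fun i => by rw [add_comm]) (by positivity) (by linarith)).trans (by linarith)

theorem HasDerivChainOn.norm_sDp_iterate_trapezoid_state_sub_le
    (hw : HasDerivChainOn w L (Icc 0 T)) (hMU : ∀ l ≤ L, ∀ t ∈ Icc 0 T, ‖w l t‖ ≤ MU)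
    (hk : 0 < k) (v : ℕ → X) {C : ℝ} {l n : ℕ} (hl : l + 2 ≤ L) (hn : (n + l + 1) * k ≤ T)
    (hE₀ : ‖(sDp k)^[l] (fun i => v i - w 0 (i * k)) n‖ ≤ C * k ^ 2)
    (hE₁ : ‖(sDp k)^[l] (fun i => v i - w 0 (i * k)) (n + 1)‖ ≤ C * k ^ 2) :
    ‖(sDp k)^[l] (fun i : ℕ => ((i * k + k / 2 : ℝ), (2 : ℝ)⁻¹ • (v (i + 1) + v i)) -
      ((i * k + k / 2 : ℝ), w 0 (i * k + k / 2))) n‖ ≤ (C + MU) * k ^ 2 := by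
  set E : ℕ → X := fun i => v i - w 0 (i * k)
  have hsplit : (fun i : ℕ => ((i * k + k / 2 : ℝ), (2 : ℝ)⁻¹ • (v (i + 1) + v i)) -
      ((i * k + k / 2 : ℝ), w 0 (i * k + k / 2))) = fun i => ((fun _ => (0 : ℝ)) i,
        (2 : ℝ)⁻¹ • (E (i + 1) + E i) +
          ((2 : ℝ)⁻¹ • (w 0 (i * k) + w 0 (i * k + k)) - w 0 (i * k + k / 2))) := by
    ext i
    · simp
    · simp only [E, Prod.snd_sub, Nat.cast_succ, add_mul, one_mul]
      module
  rw [hsplit, sDp_iterate_prodMk, Prod.norm_mk,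
    show (sDp k)^[l] (fun _ => (0 : ℝ)) n = 0 by simp [sDp_iterate_apply], norm_zero,
    max_eq_right (norm_nonneg _), sDp_iterate_add, sDp_iterate_smul, sDp_iterate_add,
    sDp_iterate_comp_add]
  calc _ ≤ 2⁻¹ * (C * k ^ 2 + C * k ^ 2) + MU * k ^ 2 := by
        refine norm_add_le_of_le ?_ (hw.norm_sDp_iterate_average_sub_midpoint_le hMU hk hl hn)
        rw [norm_smul, Real.norm_of_nonneg (by norm_num)]
        gcongr
        exact norm_add_le_of_le hE₁ hE₀
    _ = (C + MU) * k ^ 2 := by ring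

end Trapezoid

section TrapezoidError

variable {X : Type} [NormedAddCommGroup X] [NormedSpace ℝ X] {F : ℝ → X → X} {R : ℕ}
  {w : ℕ → ℝ → X} {T MU M k : ℝ} {N : ℕ} {v : ℕ → X}

theorem trapezoid_error_step [CompleteSpace X] (hF : ContDiff ℝ (R + 1) (Function.uncurry F))
    {S : Set (ℝ × X)} (hS : Convex ℝ S)
    (hM : ∀ l ≤ R + 1, ∀ z ∈ S, ‖iteratedFDeriv ℝ l (Function.uncurry F) z‖ ≤ M)
    (hw : HasDerivChainOn w (R + 2) (Icc 0 T)) (hw1 : ∀ t ∈ Icc 0 T, w 1 t = F t (w 0 t))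
    (hMU : ∀ l ≤ R + 2, ∀ t ∈ Icc 0 T, ‖w l t‖ ≤ MU) (hk : 0 < k) (hk1 : k ≤ 1) (hN : N * k ≤ T)
    (hscheme : ∀ i, i + 1 ≤ N →
      k⁻¹ • (v (i + 1) - v i) = F ((i + 1 / 2) * k) ((2 : ℝ)⁻¹ • (v (i + 1) + v i)))
    (hmem : ∀ i, i + 1 ≤ N → ((i * k + k / 2 : ℝ), (2 : ℝ)⁻¹ • (v (i + 1) + v i)) ∈ S ∧
      ((i * k + k / 2 : ℝ), w 0 (i * k + k / 2)) ∈ S)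
    {j : ℕ} (hj : j + 1 ≤ R) {C : ℝ}
    (hIH : ∀ l ≤ j, ∀ n, n + l ≤ N → ‖(sDp k)^[l] (fun i => v i - w 0 (i * k)) n‖ ≤ C * k ^ 2)
    {n : ℕ} (hn : n + (j + 1) ≤ N) :
    ‖(sDp k)^[j + 1] (fun i => v i - w 0 (i * k)) n‖ ≤
      (C + 2 ^ j * (2 ^ (j * j) * M * (1 + 2 * MU + C) ^ j) * (C + MU) + 2 * MU) * k ^ 2 := by
  have hC : 0 ≤ C := nonneg_of_mul_nonneg_left ((norm_nonneg _).trans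
    (hIH 0 (by omega) 0 (by omega))) (by positivity)
  have hgrid : ∀ l i, i + l + 1 ≤ N → ((i : ℝ) + l + 1) * k ≤ T := fun l i hi =>
    le_trans (by gcongr; exact_mod_cast hi) hN
  have hMU0 : 0 ≤ MU := (norm_nonneg _).trans (hMU 0 (by omega) 0 ⟨le_rfl, le_trans
    (by positivity) hN⟩)
  set x : ℕ → ℝ × X := fun i => ((i * k + k / 2 : ℝ), (2 : ℝ)⁻¹ • (v (i + 1) + v i))
  set y : ℕ → ℝ × X := fun i => ((i * k + k / 2 : ℝ), w 0 (i * k + k / 2))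
  have hyQ : ∀ l, 1 ≤ l → l ≤ j → ∀ n', n' + l ≤ N - 1 → ‖(sDp k)^[l] y n'‖ ≤ 1 + MU :=
    fun l h₁ h₂ n' hn' =>
      hw.norm_sDp_iterate_graph_midpoint_le hMU hk h₁ (by omega) (hgrid l n' (by omega))
  have hε : ∀ l ≤ j, ∀ n', n' + l ≤ N - 1 →
      ‖(sDp k)^[l] (fun i => x i - y i) n'‖ ≤ (C + MU) * k ^ 2 := fun l hl n' hn' =>
    hw.norm_sDp_iterate_trapezoid_state_sub_le hMU hk v (by omega) (hgrid l n' (by omega))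
      (hIH l hl n' (by omega)) (hIH l hl (n' + 1) (by omega))
  have hxQ : ∀ l, 1 ≤ l → l ≤ j → ∀ n', n' + l ≤ N - 1 →
      ‖(sDp k)^[l] x n'‖ ≤ 1 + 2 * MU + C := by
    intro l h₁ h₂ n' hn'
    rw [show x = fun i => y i + (x i - y i) by simp, sDp_iterate_add]
    have hk2 : k ^ 2 ≤ 1 := pow_le_one₀ hk.le hk1
    have := norm_add_le_of_le (hyQ l h₁ h₂ n' hn') (hε l h₂ n' hn')
    nlinarith [mul_le_mul_of_nonneg_left hk2 (add_nonneg hC hMU0)]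
  have hFxy := norm_sDp_iterate_comp_sub_comp_le hk.ne' (hF.of_le (by norm_cast; omega)) hS
    (by linarith) (fun l hl => hM l (by omega)) (fun i hi => (hmem i (by omega)).1)
    (fun i hi => (hmem i (by omega)).2) hxQ
    (fun l h₁ h₂ n' hn' => (hyQ l h₁ h₂ n' hn').trans (by linarith)) hε (n := n) (by omega)
  have hσ := hw.norm_sDp_iterate_deriv_midpoint_sub_slope_le hMU hk (l := j) (n := n) (by omega)
    (hgrid j n (by omega))
  have hrec : (sDp k)^[j + 1] (fun i => v i - w 0 (i * k)) n =
      (sDp k)^[j] (fun i => Function.uncurry F (x i) - Function.uncurry F (y i)) n +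
        (sDp k)^[j] (fun i => w 1 (i * k + k / 2) - k⁻¹ • (w 0 (i * k + k) - w 0 (i * k))) n := by
    rw [Function.iterate_succ_apply, ← sDp_iterate_add]
    refine sDp_iterate_congr k j n fun i hi₁ hi₂ => trapezoid_sDp_error_eq hw1
      (hscheme i (by omega)) ⟨by positivity, ?_⟩
    have := hgrid 0 i (by omega)
    push_cast at this
    linarith
  rw [hrec]
  calc _ ≤ 2 ^ j * (2 ^ (j * j) * M * (1 + 2 * MU + C) ^ j) * ((C + MU) * k ^ 2) +
        2 * MU * k ^ 2 := norm_add_le_of_le hFxy hσ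
    _ ≤ _ := by nlinarith [mul_nonneg hC (sq_nonneg k)]

/-- `trapezoidErrorConst C₀ MU M j * k ^ 2` bounds the `j`-th difference quotients of the error,
where `C₀ k²` bounds the error itself, `MU` the derivatives of the exact solution and `M` those of
`F`. -/
noncomputable def trapezoidErrorConst (C₀ MU M : ℝ) : ℕ → ℝ
  | 0 => C₀
  | j + 1 =>
    trapezoidErrorConst C₀ MU M j + 2 ^ j * (2 ^ (j * j) * M *
      (1 + 2 * MU + trapezoidErrorConst C₀ MU M j) ^ j) * (trapezoidErrorConst C₀ MU M j + MU) +
      2 * MU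

theorem trapezoidErrorConst_nonneg {C₀ : ℝ} (hC₀ : 0 ≤ C₀) (hMU : 0 ≤ MU) (hM : 0 ≤ M)
    (j : ℕ) : 0 ≤ trapezoidErrorConst C₀ MU M j := by
  induction j with
  | zero => exact hC₀
  | succ j ih => simp only [trapezoidErrorConst]; positivity

theorem trapezoidErrorConst_mono {C₀ : ℝ} (hC₀ : 0 ≤ C₀) (hMU : 0 ≤ MU) (hM : 0 ≤ M) :
    Monotone (trapezoidErrorConst C₀ MU M) := by
  refine monotone_nat_of_le_succ fun j => ?_
  have := trapezoidErrorConst_nonneg hC₀ hMU hM j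
  simp only [trapezoidErrorConst]
  nlinarith [show 0 ≤ 2 ^ j * (2 ^ (j * j) * M * (1 + 2 * MU + trapezoidErrorConst C₀ MU M j) ^ j) *
    (trapezoidErrorConst C₀ MU M j + MU) by positivity]

theorem trapezoid_error_sDp_iterate_le [CompleteSpace X]
    (hF : ContDiff ℝ (R + 1) (Function.uncurry F)) {K : Set (ℝ × X)} (hK : Convex ℝ K) {δ : ℝ}
    (hM0 : 0 ≤ M)
    (hM : ∀ l ≤ R + 1, ∀ z ∈ Metric.thickening δ K, ‖iteratedFDeriv ℝ l (Function.uncurry F) z‖ ≤ M)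
    (hw : HasDerivChainOn w (R + 2) (Icc 0 T)) (hw1 : ∀ t ∈ Icc 0 T, w 1 t = F t (w 0 t))
    (hwK : ∀ t ∈ Icc 0 T, (t, w 0 t) ∈ K) (hMU : ∀ l ≤ R + 2, ∀ t ∈ Icc 0 T, ‖w l t‖ ≤ MU)
    (hk : 0 < k) (hk1 : k ≤ 1) (hN : N * k ≤ T)
    (hscheme : ∀ i, i + 1 ≤ N →
      k⁻¹ • (v (i + 1) - v i) = F ((i + 1 / 2) * k) ((2 : ℝ)⁻¹ • (v (i + 1) + v i)))
    {C₀ : ℝ} (herr : ∀ n ≤ N, ‖v n - w 0 (n * k)‖ ≤ C₀ * k ^ 2) (hδ : (C₀ + MU) * k ^ 2 < δ)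
    {l n : ℕ} (hl : l ≤ R) (hn : n + l ≤ N) :
    ‖(sDp k)^[l] (fun i => v i - w 0 (i * k)) n‖ ≤ trapezoidErrorConst C₀ MU M l * k ^ 2 := by
  have hMU0 : 0 ≤ MU := (norm_nonneg _).trans (hMU 0 (by omega) 0 ⟨le_rfl, le_trans
    (by positivity) hN⟩)
  have hC₀ : 0 ≤ C₀ :=
    nonneg_of_mul_nonneg_left ((norm_nonneg _).trans (herr 0 (by omega))) (by positivity)
  have hmem : ∀ i, i + 1 ≤ N →
      ((i * k + k / 2 : ℝ), (2 : ℝ)⁻¹ • (v (i + 1) + v i)) ∈ Metric.thickening δ K ∧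
      ((i * k + k / 2 : ℝ), w 0 (i * k + k / 2)) ∈ Metric.thickening δ K := by
    intro i hi
    have hgrid : ((i : ℝ) + 1) * k ≤ T := le_trans (by gcongr; exact_mod_cast hi) hN
    have hY : ((i * k + k / 2 : ℝ), w 0 (i * k + k / 2)) ∈ K :=
      hwK _ ⟨by positivity, by linarith⟩
    refine ⟨Metric.mem_thickening_iff.mpr ⟨_, hY, ?_⟩, Metric.self_subset_thickening
      (by linarith [mul_nonneg (add_nonneg hC₀ hMU0) (sq_nonneg k)]) K hY⟩
    have := hw.norm_sDp_iterate_trapezoid_state_sub_le hMU hk v (l := 0) (by omega)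
      (by simpa using hgrid)
      (by simpa using herr i (by omega)) (by simpa using herr (i + 1) hi)
    rw [dist_eq_norm]
    refine lt_of_le_of_lt ?_ hδ
    simpa using this
  suffices h : ∀ j ≤ R, ∀ l ≤ j, ∀ n, n + l ≤ N →
      ‖(sDp k)^[l] (fun i => v i - w 0 (i * k)) n‖ ≤ trapezoidErrorConst C₀ MU M j * k ^ 2 from
    h l hl l le_rfl n hn
  intro j
  induction j with
  | zero =>
    intro _ l hl n hn
    obtain rfl : l = 0 := by omega
    simpa [trapezoidErrorConst] using herr n (by omega)
  | succ j ih =>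
    intro hj l hl n hn
    rcases (show l ≤ j ∨ l = j + 1 by omega) with hl | rfl
    · exact (ih (by omega) l hl n hn).trans
        (by gcongr; exact trapezoidErrorConst_mono hC₀ hMU0 hM0 j.le_succ)
    · exact trapezoid_error_step hF (hK.thickening δ) hM hw hw1 hMU hk hk1 hN hscheme hmem
        (by omega) (ih (by omega)) hn

end TrapezoidError

section Compactness

variable {Z : Type*} [NormedAddCommGroup Z]

theorem IsCompact.exists_bound_of_continuousOn_family {α : Type*} [TopologicalSpace α]
    {s : Set α} (hs : IsCompact s) {f : ℕ → α → Z} {n : ℕ}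
    (hf : ∀ l ≤ n, ContinuousOn (f l) s) : ∃ M, ∀ l ≤ n, ∀ x ∈ s, ‖f l x‖ ≤ M := by
  obtain ⟨M, hM⟩ := hs.exists_bound_of_continuousOn (f := fun x (l : Fin (n + 1)) => f l x)
    (continuousOn_pi.mpr fun l => hf l (by omega))
  exact ⟨M, fun l hl x hx =>
    (norm_le_pi_norm (fun l : Fin (n + 1) => f l x) ⟨l, by omega⟩).trans (hM x hx)⟩

theorem IsCompact.exists_thickening_bound_of_continuous_family {E : Type*} [PseudoMetricSpace E]
    {K : Set E} (hK : IsCompact K) {f : ℕ → E → ℝ} {n : ℕ} (hf : ∀ l ≤ n, Continuous (f l)) :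
    ∃ δ > 0, ∃ M, 0 ≤ M ∧ ∀ l ≤ n, ∀ z ∈ Metric.thickening δ K, f l z ≤ M := by
  set g : E → Fin (n + 1) → ℝ := fun x l => f l x
  have hg : Continuous g := continuous_pi fun l => hf l (by omega)
  obtain ⟨C, hC⟩ := hK.exists_bound_of_continuousOn hg.continuousOn
  obtain ⟨δ, hδ, hthick⟩ := hK.exists_thickening_subset_open
    (isOpen_lt hg.norm continuous_const : IsOpen {z | ‖g z‖ < |C| + 1})
    fun z hz => (hC z hz).trans_lt (by linarith [le_abs_self C])
  exact ⟨δ, hδ, |C| + 1, by positivity, fun l hl z hz => (le_abs_self _).trans <|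
    (norm_le_pi_norm (g z) ⟨l, by omega⟩).trans (hthick hz).le⟩

theorem IsCompact.closure_convexHull {E : Type*} [NormedAddCommGroup E] [NormedSpace ℝ E]
    [CompleteSpace E] {s : Set E} (hs : IsCompact s) : IsCompact (closure (convexHull ℝ s)) :=
  (totallyBounded_convexHull.mpr hs.totallyBounded).closure.isCompact_of_isClosed isClosed_closure

end Compactness

theorem trapezoid_error_sDp_iterate_bound {X : Type} [NormedAddCommGroup X] [NormedSpace ℝ X]
    [CompleteSpace X] {T : ℝ} (hT : 0 < T) {R : ℕ} {F : ℝ → X → X}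
    (hF : ContDiff ℝ (R + 1) (Function.uncurry F)) {u : ℝ → X}
    (hu : ContDiffOn ℝ (R + 2) u (Icc 0 T)) (hODE : ∀ t ∈ Icc 0 T, HasDerivAt u (F t (u t)) t)
    {v : ℕ → ℕ → X}
    (hscheme : ∀ N : ℕ, 0 < N → ∀ n : ℕ, n + 1 ≤ N →
      (T / N)⁻¹ • (v N (n + 1) - v N n)
        = F (((n : ℝ) + 1 / 2) * (T / N)) ((2 : ℝ)⁻¹ • (v N (n + 1) + v N n)))
    {C₀ : ℝ}
    (herr : ∀ N : ℕ, 0 < N → ∀ n ≤ N, ‖v N n - u ((n : ℝ) * (T / N))‖ ≤ C₀ * (T / N) ^ 2) :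
    ∃ k₃ > 0, ∃ C, ∀ N : ℕ, 0 < N → T / N ≤ k₃ → ∀ l ≤ R, ∀ n, n + l ≤ N →
      ‖(sDp (T / N))^[l] (fun i => v N i - u (i * (T / N))) n‖ ≤ C * (T / N) ^ 2 := by
  set w := fun l => iteratedDerivWithin l u (Icc 0 T)
  have hw := (show ContDiffOn ℝ (R + 2 : ℕ) u (Icc 0 T) by exact_mod_cast hu)
    |>.hasDerivChainOn_iteratedDerivWithin hT
  have hw0 : w 0 = u := iteratedDerivWithin_zero
  have hw1 : ∀ t ∈ Icc 0 T, w 1 t = F t (w 0 t) := fun t ht =>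
    (uniqueDiffOn_Icc hT t ht).eq_deriv _ (hw 0 (by omega) t ht)
      (hw0 ▸ (hODE t ht).hasDerivWithinAt)
  obtain ⟨MU, hMU⟩ := isCompact_Icc.exists_bound_of_continuousOn_family (f := w) (n := R + 2)
    fun l hl => hu.continuousOn_iteratedDerivWithin (by exact_mod_cast hl) (uniqueDiffOn_Icc hT)
  have hcurve : IsCompact ((fun t => (t, u t)) '' Icc 0 T) :=
    isCompact_Icc.image_of_continuousOn (continuousOn_id.prodMk hu.continuousOn)
  obtain ⟨δ, hδ, M, hM0, hM⟩ :=
    hcurve.closure_convexHull.exists_thickening_bound_of_continuous_family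
      (f := fun l z => ‖iteratedFDeriv ℝ l (Function.uncurry F) z‖) (n := R + 1)
      fun l hl => (hF.continuous_iteratedFDeriv (by exact_mod_cast hl)).norm
  have hMU0 : 0 ≤ MU := (norm_nonneg _).trans (hMU 0 (by omega) 0 ⟨le_rfl, hT.le⟩)
  have hC₀ : 0 ≤ C₀ := nonneg_of_mul_nonneg_left
    ((norm_nonneg _).trans (herr 1 one_pos 0 (by omega))) (by positivity)
  refine ⟨min 1 (δ / (C₀ + MU + 1)), by positivity, trapezoidErrorConst C₀ MU M R,
    fun N hN hk l hl n hn => ?_⟩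
  have hk1 : T / N ≤ 1 := hk.trans (min_le_left _ _)
  have hδk : (C₀ + MU) * (T / N) ^ 2 < δ := by
    have := (le_div_iff₀ (by positivity)).mp (hk.trans (min_le_right _ _))
    nlinarith [mul_le_mul_of_nonneg_left hk1 (add_nonneg hC₀ hMU0),
      (by positivity : 0 < T / N)]
  rw [← hw0]
  refine (trapezoid_error_sDp_iterate_le hF (convex_convexHull ℝ _).closure hM0 hM hw hw1
    (fun t ht => subset_closure (subset_convexHull ℝ _ ⟨t, ht, by simp⟩)) hMU
    (by positivity) hk1 (by field_simp; rfl) (hscheme N hN) (hw0 ▸ herr N hN) hδk hl hn).trans ?_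
  gcongr
  exact trapezoidErrorConst_mono hC₀ hMU0 hM0 hl

theorem trapezoidal_DCC_bounds_general
    {X : Type} [NormedAddCommGroup X] [NormedSpace ℝ X] [CompleteSpace X]
    (T : ℝ) (hT : 0 < T) (p : ℕ)
    (F : ℝ → X → X)
    (hFC : ContDiff ℝ (2 * p + 2) (Function.uncurry F))
    (u : ℝ → X)
    (hu : ContDiffOn ℝ (2 * p + 3) u (Set.Icc 0 T))
    (hODE : ∀ t ∈ Set.Icc 0 T, HasDerivAt u (F t (u t)) t)
    (v : ℕ → ℕ → X)
    -- the modified trapezoidal scheme (3.3)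
    (hscheme : ∀ N : ℕ, 0 < N → ∀ n : ℕ, n + 1 ≤ N →
      (T / N)⁻¹ • (v N (n + 1) - v N n)
        = F (((n : ℝ) + 1 / 2) * (T / N)) ((2 : ℝ)⁻¹ • (v N (n + 1) + v N n)))
    (C₀ : ℝ)
    -- second-order error bound (4.8)
    (herr : ∀ N : ℕ, 0 < N → ∀ n ≤ N, ‖v N n - u ((n : ℝ) * (T / N))‖ ≤ C₀ * (T / N) ^ 2) :
    ∃ k₃ : ℝ, 0 < k₃ ∧ ∃ C : ℝ, 0 < C ∧
      ∀ N : ℕ, 0 < N → T / N ≤ k₃ →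
        ∀ m : ℕ, m ≤ p → ∀ n : ℕ, m ≤ n → n + m + 1 ≤ N →
          ‖sDp (T / N) ((sDD (T / N))^[m] (fun i => v N i - u ((i : ℝ) * (T / N)))) n‖
              + ‖((sDD (T / N))^[m] (fun i => v N i - u ((i : ℝ) * (T / N)))) (n + 1)‖
            ≤ C * (T / N) ^ 2 := by
  obtain ⟨k₃, hk₃, C, hC⟩ := trapezoid_error_sDp_iterate_bound hT (R := 2 * p + 1)
    (by convert hFC using 1; push_cast; ring) (by convert hu using 1; push_cast; ring) hODE
    hscheme herr
  refine ⟨k₃, hk₃, 2 * |C| + 1, by positivity, fun N hN hk m hm n hnm hnN => ?_⟩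
  obtain ⟨n, rfl⟩ : ∃ n', n = n' + m := ⟨n - m, by omega⟩
  rw [sDp_sDD_iterate_apply, show n + m + 1 = n + 1 + m by ring, sDD_iterate_apply]
  have h₁ := hC N hN hk (2 * m + 1) (by omega) n (by omega)
  have h₂ := hC N hN hk (2 * m) (by omega) (n + 1) (by omega)
  nlinarith [le_abs_self C, sq_nonneg (T / N)]

/-- Lemma 2: the solution `(u^{2,n})_n` of the modified trapezoidal scheme (3.3) satisfies
the higher-order difference bounds (4.10):
`‖D(D₊D₋)^m(u^{2,n+1/2} − u(t_{n+1/2}))‖ + ‖(D₊D₋)^m(u^{2,n+1} − u(t_{n+1}))‖ ≤ C k²`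
for all `m = 0, …, p` and admissible `n ≥ m`, for all steps `k = T/N ≤ k₃`.
Here `v N = (u^{2,n})_n` is the grid sequence for the step `k = T/N`, `t_n = n·k`. -/
theorem trapezoidal_DCC_bounds
    {X : Type} [NormedAddCommGroup X] [NormedSpace ℝ X] [CompleteSpace X]
    (T : ℝ) (hT : 0 < T) (p : ℕ) (hp : 1 ≤ p)
    (F : ℝ → X → X) (μ : ℝ) (hμ : 0 < μ)
    (hFC : ContDiff ℝ (2 * p + 2) (Function.uncurry F))
    (hFLip : ∀ t x y, ‖F t x - F t y‖ ≤ μ * ‖x - y‖)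
    (u : ℝ → X) (u₀ : X) (hu0 : u 0 = u₀)
    (hu : ContDiffOn ℝ (2 * p + 3) u (Set.Icc 0 T))
    (hODE : ∀ t ∈ Set.Icc 0 T, HasDerivAt u (F t (u t)) t)
    (v : ℕ → ℕ → X)
    -- the modified trapezoidal scheme (3.3)
    (hscheme : ∀ N : ℕ, 0 < N → ∀ n : ℕ, n + 1 ≤ N →
      (T / N)⁻¹ • (v N (n + 1) - v N n)
        = F (((n : ℝ) + 1 / 2) * (T / N)) ((2 : ℝ)⁻¹ • (v N (n + 1) + v N n)))
    (hinit : ∀ N : ℕ, v N 0 = u₀)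
    (C₀ : ℝ)
    -- second-order error bound (4.8)
    (herr : ∀ N : ℕ, 0 < N → ∀ n ≤ N, ‖v N n - u ((n : ℝ) * (T / N))‖ ≤ C₀ * (T / N) ^ 2) :
    ∃ k₃ : ℝ, 0 < k₃ ∧ ∃ C : ℝ, 0 < C ∧
      ∀ N : ℕ, 0 < N → T / N ≤ k₃ →
        ∀ m : ℕ, m ≤ p → ∀ n : ℕ, m ≤ n → n + m + 1 ≤ N →
          ‖sDp (T / N) ((sDD (T / N))^[m] (fun i => v N i - u ((i : ℝ) * (T / N)))) n‖
              + ‖((sDD (T / N))^[m] (fun i => v N i - u ((i : ℝ) * (T / N)))) (n + 1)‖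
            ≤ C * (T / N) ^ 2 :=
  trapezoidal_DCC_bounds_general T hT p F hFC u hu hODE v hscheme C₀ herr
end

section
/- Let k > 0, λ ∈ ℂ with Re(λ) < 0, and set r = (2 + λk)/(2 − λk). Let c₂, c₃, c₄, … be arbitrary real coefficients and, for each j ≥ 0, let (u^{2j+2,n})_n be the deferred correction solutions for the test problem u' = λu, u(0) = 1, i.e. u^{2,n} = r^n and for n ≥ j: u^{2j+2,n+1} = r·u^{2j+2,n} + (2/(2 − λk))·( k·Σ_{i=1}^{j} c_{2i+1} k^{2i} D₋(D₊D₋)^i u^{2j,n+1} − λk·Σ_{i=1}^{j} c_{2i} k^{2i} (D₊D₋)^i ((u^{2j,n+1} + u^{2j,n})/2) ), where the difference operators act on (u^{2j,n}) with step k. Then for every j ≥ 0, lim_{n→∞} |u^{2j+2,n}| = 0; that is, each deferred correction scheme DC(2j+2) is A-stable. -/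
/-!
Each correction sweep `u^{2j+2}` satisfies a perturbed Crank–Nicolson recurrence
`u^{n+1} = r u^n + g^n` with `|r| < 1` because `Re λ < 0`, where the forcing `g` is a finite
combination of difference quotients of the previous sweep `u^{2j}`. By induction on `j`, `u^{2j}`
tends to `0`, hence so do its difference quotients and `g`; and a contraction perturbed by a null
sequence is itself null.
-/

open Filter Topology

theorem tendsto_zero_of_le_mul_add {a b : ℕ → ℝ} {ρ : ℝ} (hρ₀ : 0 ≤ ρ) (hρ₁ : ρ < 1)
    (ha : ∀ n, 0 ≤ a n) (hb : Tendsto b atTop (𝓝 0))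
    (h : ∀ᶠ n in atTop, a (n + 1) ≤ ρ * a n + b n) : Tendsto a atTop (𝓝 0) := by
  refine tendsto_order.2 ⟨fun e he => .of_forall fun n => he.trans_le (ha n), fun ε hε => ?_⟩
  have hδ : 0 < (1 - ρ) * (ε / 2) := by nlinarith
  obtain ⟨M, hM⟩ := eventually_atTop.1 (h.and (hb.eventually (gt_mem_nhds hδ)))
  -- Past `M`, the excess `a n - ε / 2` contracts geometrically.
  have hgeom (m : ℕ) : a (M + m) - ε / 2 ≤ ρ ^ m * (a M - ε / 2) := by
    refine le_geom (u := fun m => a (M + m) - ε / 2) hρ₀ m fun i _ => ?_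
    obtain ⟨hstep, hsmall⟩ := hM (M + i) (Nat.le_add_right _ _)
    show a (M + i + 1) - ε / 2 ≤ ρ * (a (M + i) - ε / 2)
    nlinarith
  have hpow : Tendsto (fun m => ρ ^ m * (a M - ε / 2)) atTop (𝓝 0) := by
    simpa using (tendsto_pow_atTop_nhds_zero_of_lt_one hρ₀ hρ₁).mul_const (a M - ε / 2)
  obtain ⟨m₀, hm₀⟩ := eventually_atTop.1 (hpow.eventually (gt_mem_nhds (half_pos hε)))
  refine eventually_atTop.2 ⟨M + m₀, fun n hn => ?_⟩
  obtain ⟨m, rfl⟩ := Nat.exists_eq_add_of_le (le_trans (Nat.le_add_right M m₀) hn)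
  linarith [hgeom m, hm₀ m (by omega)]

theorem tendsto_zero_of_eventually_eq_smul_add {𝕜 E : Type*} [NormedField 𝕜]
    [SeminormedAddCommGroup E] [NormedSpace 𝕜 E] {r : 𝕜} {u g : ℕ → E} (hr : ‖r‖ < 1)
    (hu : ∀ᶠ n in atTop, u (n + 1) = r • u n + g n) (hg : Tendsto g atTop (𝓝 0)) :
    Tendsto u atTop (𝓝 0) := by
  rw [tendsto_zero_iff_norm_tendsto_zero] at hg ⊢
  refine tendsto_zero_of_le_mul_add (norm_nonneg r) hr (fun n => norm_nonneg _) hg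
    (hu.mono fun n hn => ?_)
  rw [hn, ← norm_smul]
  exact norm_add_le _ _

theorem Complex.norm_two_add_div_two_sub_lt_one {z : ℂ} (hz : z.re < 0) :
    ‖(2 + z) / (2 - z)‖ < 1 := by
  have h : ‖2 + z‖ < ‖2 - z‖ := by
    rw [← sq_lt_sq₀ (norm_nonneg _) (norm_nonneg _), Complex.sq_norm, Complex.sq_norm,
      Complex.normSq_apply, Complex.normSq_apply]
    simp only [Complex.add_re, Complex.add_im, Complex.sub_re, Complex.sub_im,
      Complex.re_ofNat, Complex.im_ofNat]
    nlinarith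
  rw [norm_div, div_lt_one ((norm_nonneg _).trans_lt h)]
  exact h

section DifferenceOperators

variable {X : Type*} [AddCommGroup X] [Module ℝ X] [TopologicalSpace X]
  [IsTopologicalAddGroup X] [ContinuousConstSMul ℝ X] {s : ℕ → X} (k : ℝ)

theorem Filter.Tendsto.sDp (h : Tendsto s atTop (𝓝 0)) : Tendsto (sDp k s) atTop (𝓝 0) := by
  unfold _root_.sDp
  simpa using ((h.comp (tendsto_add_atTop_nat 1)).sub h).const_smul k⁻¹

theorem Filter.Tendsto.sDm (h : Tendsto s atTop (𝓝 0)) : Tendsto (sDm k s) atTop (𝓝 0) := by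
  unfold _root_.sDm
  simpa using (h.sub (h.comp (tendsto_sub_atTop_nat 1))).const_smul k⁻¹

theorem Filter.Tendsto.iterate_sDD (h : Tendsto s atTop (𝓝 0)) (i : ℕ) :
    Tendsto ((sDD k)^[i] s) atTop (𝓝 0) := by
  induction i generalizing s with
  | zero => exact h
  | succ i ih => exact ih ((h.sDm k).sDp k)

end DifferenceOperators

theorem tendsto_finset_sum_mul_zero {ι α R : Type*} [Semiring R] [TopologicalSpace R]
    [IsTopologicalSemiring R] {l : Filter α} (t : Finset ι) (a : ι → R) {f : ι → α → R}
    (hf : ∀ i ∈ t, Tendsto (f i) l (𝓝 0)) :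
    Tendsto (fun x => ∑ i ∈ t, a i * f i x) l (𝓝 0) := by
  simpa using tendsto_finsetSum t fun i hi => (hf i hi).const_mul (a i)

/-- Theorem 6 (A-stability): for the test problem `u' = λu`, `u(0) = 1`, with fixed `k > 0`
and `Re(λ) < 0`, every deferred correction solution `(u^{2j+2,n})_n` satisfies
`|u^{2j+2,n}| → 0` as `n → ∞`; that is, each scheme DC(2j+2) is A-stable. Here `U j` denotes
the sequence `(u^{2j+2,n})_n`; `U 0` is the modified trapezoidal (Crank–Nicolson) solution
`r^n` with `r = (2+λk)/(2−λk)`, and `U (j+1)` is any sequence satisfying the DC recurrence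
(6.5) built from `U j`. -/
theorem DC_A_stable (k : ℝ) (hk : 0 < k) (lam : ℂ) (hlam : lam.re < 0)
    (c : ℕ → ℝ) (U : ℕ → ℕ → ℂ)
    (hU0 : ∀ n : ℕ, U 0 n = ((2 + lam * k) / (2 - lam * k)) ^ n)
    (hrec : ∀ j : ℕ, ∀ n : ℕ, j + 1 ≤ n →
      U (j + 1) (n + 1) =
        ((2 + lam * k) / (2 - lam * k)) * U (j + 1) n +
          (2 / (2 - lam * k)) *
            ((k : ℂ) *
                ∑ i ∈ Finset.Icc 1 (j + 1),
                  ((c (2 * i + 1) : ℂ) * (k : ℂ) ^ (2 * i)) *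
                    sDm k ((sDD k)^[i] (U j)) (n + 1)
              - lam * (k : ℂ) *
                ∑ i ∈ Finset.Icc 1 (j + 1),
                  ((c (2 * i) : ℂ) * (k : ℂ) ^ (2 * i)) *
                    ((sDD k)^[i] (fun m => (U j (m + 1) + U j m) / 2)) n)) :
    ∀ j : ℕ, Filter.Tendsto (fun n : ℕ => ‖U j n‖) Filter.atTop (nhds 0) := by
  have hr : ‖(2 + lam * k) / (2 - lam * k)‖ < 1 :=
    Complex.norm_two_add_div_two_sub_lt_one (by simpa using mul_neg_of_neg_of_pos hlam hk)
  intro j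
  suffices Tendsto (U j) atTop (𝓝 0) by simpa using this.norm
  induction j with
  | zero => simpa only [funext hU0] using tendsto_pow_atTop_nhds_zero_of_norm_lt_one hr
  | succ j ih =>
    refine tendsto_zero_of_eventually_eq_smul_add hr (eventually_atTop.2 ⟨j + 1, hrec j⟩) ?_
    have havg : Tendsto (fun m => (U j (m + 1) + U j m) / 2) atTop (𝓝 0) := by
      simpa using ((ih.comp (tendsto_add_atTop_nat 1)).add ih).div_const 2
    have hodd := tendsto_finset_sum_mul_zero (Finset.Icc 1 (j + 1))
      (fun i => (c (2 * i + 1) : ℂ) * (k : ℂ) ^ (2 * i)) fun i _ =>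
        ((ih.iterate_sDD k i).sDm k).comp (tendsto_add_atTop_nat 1)
    have heven := tendsto_finset_sum_mul_zero (Finset.Icc 1 (j + 1))
      (fun i => (c (2 * i) : ℂ) * (k : ℂ) ^ (2 * i)) fun i _ => havg.iterate_sDD k i
    simpa using ((hodd.const_mul (k : ℂ)).sub (heven.const_mul (lam * k))).const_mul
      (2 / (2 - lam * k))
end
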